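/- Completeness of minimal logic with respect to epistemic realizability: if M is a pure β-normalizing metaterm and ⟨A⟩(M^Γ) reduces to ⋆ (where M^Γ substitutes generators for variables declared in Γ), then the β-normal form M↓ of M is a well-typed term with Γ ⊢ M↓ : A in the simply typed lambda calculus. -/

import Mathlib

/-! The metacalculus λ→m for minimal logic: untyped λ-calculus extended with
a success constant ⋆, a guard construct (M; N), and generators ✠𝐚 / verifiers ⟨𝐚⟩
for atomic types. Terms use de Bruijn indices. -/

/-- Simple types: atomic types and arrows. -/
inductive Ty : Type
  | atom : ℕ → Ty
  | arrow : Ty → Ty → Ty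

/-- Metaterms of the metacalculus λ→m (de Bruijn indices). -/
inductive Tm : Type
  | var : ℕ → Tm
  | lam : Tm → Tm
  | app : Tm → Tm → Tm
  | star : Tm
  | guard : Tm → Tm → Tm
  | gen : ℕ → Tm
  | verif : ℕ → Tm → Tm

namespace Tm

/-- Shift de Bruijn indices ≥ c by d. -/
def shift (d c : ℕ) : Tm → Tm
  | var n => if n < c then var n else var (n + d)
  | lam M => lam (shift d (c+1) M)
  | app M N => app (shift d c M) (shift d c N)
  | star => star
  | guard M N => guard (shift d c M) (shift d c N)
  | gen a => gen a
  | verif a M => verif a (shift d c M)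

/-- Capture-avoiding substitution of the variable k by N. -/
def subst (k : ℕ) (N : Tm) : Tm → Tm
  | var n => if n = k then N else if k < n then var (n - 1) else var n
  | lam M => lam (subst (k+1) (shift 1 0 N) M)
  | app M P => app (subst k N M) (subst k N P)
  | star => star
  | guard M P => guard (subst k N M) (subst k N P)
  | gen a => gen a
  | verif a M => verif a (subst k N M)

/-- Pure metaterms: only variables, abstractions and applications. -/
def Pure : Tm → Prop
  | var _ => True
  | lam M => Pure M
  | app M N => Pure M ∧ Pure N
  | _ => False

end Tm

/-- One-step reduction of λ→m, closed under arbitrary contexts. -/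
inductive Step : Tm → Tm → Prop
  | beta (M N : Tm) : Step (.app (.lam M) N) (Tm.subst 0 N M)
  | guardStar (M : Tm) : Step (.guard .star M) M
  | verifGen (a : ℕ) : Step (.verif a (.gen a)) .star
  | lam {M M'} : Step M M' → Step (.lam M) (.lam M')
  | appL {M M'} (N) : Step M M' → Step (.app M N) (.app M' N)
  | appR {N N'} (M) : Step N N' → Step (.app M N) (.app M N')
  | guardL {M M'} (N) : Step M M' → Step (.guard M N) (.guard M' N)
  | guardR {N N'} (M) : Step N N' → Step (.guard M N) (.guard M N')
  | verif {M M'} (a) : Step M M' → Step (.verif a M) (.verif a M')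

/-- Weak head reduction of λ→m: the rules closed under weak head contexts only. -/
inductive WStep : Tm → Tm → Prop
  | beta (M N : Tm) : WStep (.app (.lam M) N) (Tm.subst 0 N M)
  | guardStar (M : Tm) : WStep (.guard .star M) M
  | verifGen (a : ℕ) : WStep (.verif a (.gen a)) .star
  | appL {M M'} (N) : WStep M M' → WStep (.app M N) (.app M' N)
  | guardL {M M'} (N) : WStep M M' → WStep (.guard M N) (.guard M' N)
  | verif {M M'} (a) : WStep M M' → WStep (.verif a M) (.verif a M')

/-- β-reduction alone, closed under arbitrary contexts. -/
inductive BStep : Tm → Tm → Prop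
  | beta (M N : Tm) : BStep (.app (.lam M) N) (Tm.subst 0 N M)
  | lam {M M'} : BStep M M' → BStep (.lam M) (.lam M')
  | appL {M M'} (N) : BStep M M' → BStep (.app M N) (.app M' N)
  | appR {N N'} (M) : BStep N N' → BStep (.app M N) (.app M N')
  | guardL {M M'} (N) : BStep M M' → BStep (.guard M N) (.guard M' N)
  | guardR {N N'} (M) : BStep N N' → BStep (.guard M N) (.guard M N')
  | verif {M M'} (a) : BStep M M' → BStep (.verif a M) (.verif a M')

mutual
/-- The generator ✠A for an arbitrary simple type A. -/
def genT : Ty → Tm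
  | .atom a => .gen a
  | .arrow A B => .lam (.guard (verifT A (.var 0)) (genT B))
/-- The verifier ⟨A⟩M for an arbitrary simple type A applied to M. -/
def verifT : Ty → Tm → Tm
  | .atom a, M => .verif a M
  | .arrow A B, M => verifT B (.app M (genT A))
end



/-- Parallel (simultaneous) substitution of all free variables. -/
def liftSub (σ : ℕ → Tm) : ℕ → Tm :=
  fun n => match n with
  | 0 => .var 0
  | n+1 => Tm.shift 1 0 (σ n)

def substPar (σ : ℕ → Tm) : Tm → Tm
  | .var n => σ n
  | .lam M => .lam (substPar (liftSub σ) M)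
  | .app M N => .app (substPar σ M) (substPar σ N)
  | .star => .star
  | .guard M N => .guard (substPar σ M) (substPar σ N)
  | .gen a => .gen a
  | .verif a M => .verif a (substPar σ M)

/-- Typing judgments of the simply typed λ-calculus (de Bruijn). -/
inductive Typing : List Ty → Tm → Ty → Prop
  | var {Γ : List Ty} {n : ℕ} {A : Ty} :
      Γ[n]? = some A → Typing Γ (.var n) A
  | lam {Γ : List Ty} {M : Tm} {A B : Ty} :
      Typing (A :: Γ) M B → Typing Γ (.lam M) (.arrow A B)
  | app {Γ : List Ty} {M N : Tm} {A B : Ty} :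
      Typing Γ M (.arrow A B) → Typing Γ N A → Typing Γ (.app M N) B

/-- The generative substitution for Γ: each free variable x:B ∈ Γ is replaced
by the generator ✠B. -/
def genSub (Γ : List Ty) : ℕ → Tm :=
  fun n => match Γ[n]? with
  | some A => genT A
  | none => .var n

/-!
Confluence of λ→m (parallel reduction and Takahashi's complete development) makes
realizability invariant under reduction, so `M` may be replaced by its β-normal form
`λx₁…xₖ. y N₁…Nₘ`. Verifying `⟨A₁ ⇒ ⋯ ⇒ Aₖ ⇒ 𝐚⟩` feeds the generators `✠Aᵢ` to the
abstractions, which extends `Γ` by `xᵢ : Aᵢ`. The head `y` then stands for a generator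
`✠B`, and `✠B N₁ … Nₘ ✠C₁ …` can only reach an atomic generator by discharging each guard
`⟨Bⱼ⟩Nⱼ`, so every argument realizes the corresponding argument type of `B` and is typed by
induction. What remains is that `✠B` realizes `A` only if `A = B`, by induction on both types.
-/

namespace Tm

theorem shift_shift (d d' : ℕ) {c c' : ℕ} (h : c' ≤ c) (M : Tm) :
    shift d (c + d') (shift d' c' M) = shift d' c' (shift d c M) := by
  induction M generalizing c c' with
  | var n => grind [shift]
  | lam M ih => simp only [shift, Nat.add_right_comm c d' 1, ih (Nat.succ_le_succ h)]
  | _ => simp_all [shift]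

theorem subst_shift_cancel (k : ℕ) (N M : Tm) : subst k N (shift 1 k M) = M := by
  induction M generalizing k N with
  | var n => grind [shift, subst]
  | _ => simp_all [shift, subst]

theorem shift_subst_of_le (d : ℕ) {c k : ℕ} (h : k ≤ c) (N M : Tm) :
    shift d c (subst k N M) = subst k (shift d c N) (shift d (c + 1) M) := by
  induction M generalizing c k N with
  | var n => grind [shift, subst]
  | lam M ih =>
    simp only [subst, shift, ih (Nat.succ_le_succ h), shift_shift d 1 (Nat.zero_le c) N]
  | _ => simp_all [shift, subst]

theorem shift_subst_of_ge (d : ℕ) {c k : ℕ} (h : c ≤ k) (N M : Tm) :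
    shift d c (subst k N M) = subst (k + d) (shift d c N) (shift d c M) := by
  induction M generalizing c k N with
  | var n => grind [shift, subst]
  | lam M ih =>
    simp only [subst, shift, ih (Nat.succ_le_succ h), ← shift_shift d 1 (Nat.zero_le c) N,
      Nat.add_right_comm k 1 d]
  | _ => simp_all [shift, subst]

end Tm

theorem substPar_shift (σ : ℕ → Tm) (d c : ℕ) (M : Tm) :
    substPar σ (Tm.shift d c M) = substPar (fun n => if n < c then σ n else σ (n + d)) M := by
  induction M generalizing σ c with
  | var n => by_cases n < c <;> simp [Tm.shift, substPar, *]
  | lam M ih =>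
    simp only [Tm.shift, substPar, ih]
    congr 2; funext n
    cases n with
    | zero => simp [liftSub]
    | succ m => by_cases m < c <;> simp [liftSub, Nat.add_right_comm m 1 d, *]
  | _ => simp_all [Tm.shift, substPar]

theorem shift_substPar (d c : ℕ) (σ : ℕ → Tm) (M : Tm) :
    Tm.shift d c (substPar σ M) = substPar (fun n => Tm.shift d c (σ n)) M := by
  induction M generalizing σ c with
  | lam M ih =>
    simp only [substPar, Tm.shift, ih]
    congr 2; funext n
    cases n with
    | zero => simp [liftSub, Tm.shift]
    | succ m => exact Tm.shift_shift d 1 (Nat.zero_le c) (σ m)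
  | _ => simp_all [Tm.shift, substPar]

theorem subst_substPar (k : ℕ) (N : Tm) (σ : ℕ → Tm) (M : Tm) :
    Tm.subst k N (substPar σ M) = substPar (fun n => Tm.subst k N (σ n)) M := by
  induction M generalizing σ k N with
  | lam M ih =>
    simp only [substPar, Tm.subst, ih]
    congr 2; funext n
    cases n with
    | zero => simp [liftSub, Tm.subst]
    | succ m => exact (Tm.shift_subst_of_ge 1 (Nat.zero_le k) N (σ m)).symm
  | _ => simp_all [Tm.subst, substPar]

theorem subst_eq_substPar (k : ℕ) (N M : Tm) :
    Tm.subst k N M =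
      substPar (fun n => if n < k then .var n else if n = k then N else .var (n - 1)) M := by
  induction M generalizing k N with
  | var n => grind [Tm.subst, substPar]
  | lam M ih =>
    simp only [Tm.subst, substPar, ih]
    congr 2; funext n
    cases n with
    | zero => simp [liftSub]
    | succ m => grind [liftSub, Tm.shift]
  | _ => simp_all [Tm.subst, substPar]

theorem substPar_substPar (σ τ : ℕ → Tm) (M : Tm) :
    substPar σ (substPar τ M) = substPar (fun n => substPar σ (τ n)) M := by
  induction M generalizing σ τ with
  | lam M ih =>
    simp only [substPar, ih]
    congr 2; funext n
    cases n with
    | zero => simp [liftSub, substPar]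
    | succ m => simp [liftSub, substPar_shift, shift_substPar]
  | _ => simp_all [substPar]

theorem substPar_subst (σ : ℕ → Tm) (N M : Tm) :
    substPar σ (Tm.subst 0 N M) = Tm.subst 0 (substPar σ N) (substPar (liftSub σ) M) := by
  rw [subst_eq_substPar 0 N M, substPar_substPar, subst_substPar]
  congr 1; funext n
  cases n <;> simp [substPar, liftSub, Tm.subst, Tm.subst_shift_cancel]

def consSub (N : Tm) (σ : ℕ → Tm) : ℕ → Tm
  | 0 => N
  | m + 1 => σ m

theorem subst_substPar_liftSub (N : Tm) (σ : ℕ → Tm) (M : Tm) :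
    Tm.subst 0 N (substPar (liftSub σ) M) = substPar (consSub N σ) M := by
  rw [subst_substPar]
  congr 1; funext n
  cases n <;> simp [liftSub, Tm.subst, consSub, Tm.subst_shift_cancel]

abbrev Reduces := Relation.ReflTransGen Step

infix:50 " ↠ " => Reduces

namespace Reduces

variable {M M' N N' : Tm}

theorem lam (h : M ↠ M') : .lam M ↠ .lam M' :=
  Relation.ReflTransGen.lift Tm.lam (fun _ _ => Step.lam) _ _ h

theorem appL (N : Tm) (h : M ↠ M') : .app M N ↠ .app M' N :=
  Relation.ReflTransGen.lift (Tm.app · N) (fun _ _ => Step.appL N) _ _ h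

theorem appR (M : Tm) (h : N ↠ N') : .app M N ↠ .app M N' :=
  Relation.ReflTransGen.lift (Tm.app M) (fun _ _ => Step.appR M) _ _ h

theorem guardL (N : Tm) (h : M ↠ M') : .guard M N ↠ .guard M' N :=
  Relation.ReflTransGen.lift (Tm.guard · N) (fun _ _ => Step.guardL N) _ _ h

theorem guardR (M : Tm) (h : N ↠ N') : .guard M N ↠ .guard M N' :=
  Relation.ReflTransGen.lift (Tm.guard M) (fun _ _ => Step.guardR M) _ _ h

theorem verif (a : ℕ) (h : M ↠ M') : .verif a M ↠ .verif a M' :=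
  Relation.ReflTransGen.lift (Tm.verif a) (fun _ _ => Step.verif a) _ _ h

end Reduces

inductive Par : Tm → Tm → Prop
  | var (n) : Par (.var n) (.var n)
  | star : Par .star .star
  | gen (a) : Par (.gen a) (.gen a)
  | lam {M M'} : Par M M' → Par (.lam M) (.lam M')
  | app {M M' N N'} : Par M M' → Par N N' → Par (.app M N) (.app M' N')
  | guard {M M' N N'} : Par M M' → Par N N' → Par (.guard M N) (.guard M' N')
  | verif {M M'} (a) : Par M M' → Par (.verif a M) (.verif a M')
  | beta {M M' N N'} : Par M M' → Par N N' → Par (.app (.lam M) N) (Tm.subst 0 N' M')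
  | guardStar {N N'} : Par N N' → Par (.guard .star N) N'
  | verifGen (a) : Par (.verif a (.gen a)) .star

namespace Par

theorem refl : ∀ M : Tm, Par M M
  | .var n => .var n
  | .lam M => .lam (refl M)
  | .app M N => .app (refl M) (refl N)
  | .star => .star
  | .guard M N => .guard (refl M) (refl N)
  | .gen a => .gen a
  | .verif a M => .verif a (refl M)

theorem of_step {M N : Tm} (h : Step M N) : Par M N := by
  induction h with
  | beta M N => exact .beta (refl M) (refl N)
  | guardStar M => exact .guardStar (refl M)
  | verifGen a => exact .verifGen a
  | lam _ ih => exact .lam ih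
  | appL N _ ih => exact .app ih (refl N)
  | appR M _ ih => exact .app (refl M) ih
  | guardL N _ ih => exact .guard ih (refl N)
  | guardR M _ ih => exact .guard (refl M) ih
  | verif a _ ih => exact .verif a ih

theorem reduces {M N : Tm} (h : Par M N) : M ↠ N := by
  induction h with
  | var | star | gen => exact .refl
  | lam _ ih => exact ih.lam
  | app _ _ ihM ihN => exact (ihM.appL _).trans (ihN.appR _)
  | guard _ _ ihM ihN => exact (ihM.guardL _).trans (ihN.guardR _)
  | verif a _ ih => exact ih.verif a
  | beta _ _ ihM ihN => exact (ihM.lam.appL _).trans ((ihN.appR _).tail (Step.beta _ _))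
  | guardStar _ ih => exact .head (Step.guardStar _) ih
  | verifGen a => exact .single (Step.verifGen a)

theorem shift {M M' : Tm} (h : Par M M') (d c : ℕ) : Par (M.shift d c) (M'.shift d c) := by
  induction h generalizing c with
  | var n => exact refl _
  | beta _ _ ihM ihN =>
    rw [Tm.shift_subst_of_le d (Nat.zero_le c)]
    exact .beta (ihM (c + 1)) (ihN c)
  | _ => constructor <;> solve_by_elim

theorem substPar {M M' : Tm} {σ τ : ℕ → Tm} (h : Par M M') (hστ : ∀ n, Par (σ n) (τ n)) :
    Par (substPar σ M) (substPar τ M') := by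
  induction h generalizing σ τ with
  | var n => exact hστ n
  | lam _ ih =>
    refine .lam (ih fun n => ?_)
    cases n with
    | zero => exact refl _
    | succ m => exact (hστ m).shift 1 0
  | beta _ _ ihM ihN =>
    rw [_root_.substPar_subst]
    refine .beta (ihM fun n => ?_) (ihN hστ)
    cases n with
    | zero => exact refl _
    | succ m => exact (hστ m).shift 1 0
  | _ => constructor <;> solve_by_elim

end Par

theorem Par.subst {M M' N N' : Tm} (hM : Par M M') (hN : Par N N') :
    Par (Tm.subst 0 N M) (Tm.subst 0 N' M') := by
  rw [subst_eq_substPar, subst_eq_substPar]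
  refine hM.substPar fun n => ?_
  cases n with
  | zero => simpa using hN
  | succ m => simpa using Par.refl _

/-- Takahashi's complete development. -/
def cd : Tm → Tm
  | .lam M => .lam (cd M)
  | .app (.lam M) N => Tm.subst 0 (cd N) (cd M)
  | .app M N => .app (cd M) (cd N)
  | .guard .star N => cd N
  | .guard M N => .guard (cd M) (cd N)
  | .verif a (.gen b) => if a = b then .star else .verif a (.gen b)
  | .verif a M => .verif a (cd M)
  | M => M

theorem Par.cd {M N : Tm} (h : Par M N) : Par N (cd M) := by
  induction h with
  | var | star | gen => exact Par.refl _
  | lam _ ih => exact .lam ih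
  | @app M _ _ _ hM _ ihM ihN =>
    cases M with
    | lam M₀ =>
      cases hM with
      | lam => cases ihM with
        | lam ih₀ => exact .beta ih₀ ihN
    | _ => exact .app ihM ihN
  | @guard M _ _ _ hM _ ihM ihN =>
    cases M with
    | star => cases hM; exact .guardStar ihN
    | _ => exact .guard ihM ihN
  | @verif M _ a hM ih =>
    cases M with
    | gen b =>
      cases hM
      by_cases hab : a = b
      · subst hab; simpa [_root_.cd] using Par.verifGen a
      · simpa [_root_.cd, hab] using Par.refl _
    | _ => exact .verif a ih
  | beta _ _ ihM ihN => exact ihM.subst ihN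
  | guardStar _ ih => exact ih
  | verifGen a => simpa [_root_.cd] using Par.star

theorem reduces_iff_reflTransGen_par {M N : Tm} : M ↠ N ↔ Relation.ReflTransGen Par M N :=
  ⟨Relation.ReflTransGen.mono (fun _ _ => Par.of_step) _ _,
    Relation.ReflTransGen.lift' id (fun _ _ => Par.reduces) _ _⟩

theorem Reduces.confluent {M N₁ N₂ : Tm} (h₁ : M ↠ N₁) (h₂ : M ↠ N₂) :
    ∃ P, N₁ ↠ P ∧ N₂ ↠ P := by
  rw [reduces_iff_reflTransGen_par] at *
  obtain ⟨P, h₁P, h₂P⟩ := Relation.church_rosser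
    (fun _ _ _ hb hc => ⟨_, .single hb.cd, .single hc.cd⟩) h₁ h₂
  exact ⟨P, reduces_iff_reflTransGen_par.2 h₁P, reduces_iff_reflTransGen_par.2 h₂P⟩

theorem star_normal : ∀ P, ¬ Step .star P := fun _ h => nomatch h

theorem gen_normal (a : ℕ) : ∀ P, ¬ Step (.gen a) P := fun _ h => nomatch h

theorem var_normal (n : ℕ) : ∀ P, ¬ Step (.var n) P := fun _ h => nomatch h

namespace Reduces

theorem eq_of_normal {T N : Tm} (hT : ∀ P, ¬ Step T P) (h : T ↠ N) : N = T :=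
  (Relation.reflTransGen_iff_eq hT).1 h

theorem to_normal_of_reduces {M M' T : Tm} (hT : ∀ P, ¬ Step T P) (h : M ↠ T) (h' : M ↠ M') :
    M' ↠ T := by
  obtain ⟨P, hTP, hM'P⟩ := h.confluent h'
  rwa [eq_of_normal hT hTP] at hM'P

theorem beta {M N N' T : Tm} (hN : N ↠ N') (h : Tm.subst 0 N' M ↠ T) : .app (.lam M) N ↠ T :=
  (hN.appR _).trans (.head (Step.beta _ _) h)

theorem lam_inv {M T : Tm} (h : .lam M ↠ T) : ∃ M', T = .lam M' ∧ M ↠ M' := by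
  generalize hX : Tm.lam M = X at h
  induction h using Relation.ReflTransGen.head_induction_on generalizing M with
  | refl => exact ⟨M, hX.symm, .refl⟩
  | head hs _ ih =>
    subst hX
    cases hs with
    | lam hs => obtain ⟨M', rfl, h⟩ := ih rfl; exact ⟨M', rfl, .head hs h⟩

theorem guard_inv {G H T : Tm} (h : .guard G H ↠ T) :
    (∃ G' H', T = .guard G' H' ∧ G ↠ G' ∧ H ↠ H') ∨ (G ↠ .star ∧ H ↠ T) := by
  generalize hX : Tm.guard G H = X at h
  induction h using Relation.ReflTransGen.head_induction_on generalizing G H with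
  | refl => exact .inl ⟨G, H, hX.symm, .refl, .refl⟩
  | head hs hT ih =>
    subst hX
    cases hs with
    | guardStar => exact .inr ⟨.refl, hT⟩
    | guardL _ hs =>
      rcases ih rfl with ⟨G', H', rfl, hG, hH⟩ | ⟨hG, hH⟩
      · exact .inl ⟨G', H', rfl, .head hs hG, hH⟩
      · exact .inr ⟨.head hs hG, hH⟩
    | guardR _ hs =>
      rcases ih rfl with ⟨G', H', rfl, hG, hH⟩ | ⟨hG, hH⟩
      · exact .inl ⟨G', H', rfl, hG, .head hs hH⟩
      · exact .inr ⟨hG, .head hs hH⟩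

theorem verif_inv {a : ℕ} {M T : Tm} (h : .verif a M ↠ T) :
    (∃ M', T = .verif a M' ∧ M ↠ M') ∨ (M ↠ .gen a ∧ T = .star) := by
  generalize hX : Tm.verif a M = X at h
  induction h using Relation.ReflTransGen.head_induction_on generalizing M with
  | refl => exact .inl ⟨M, hX.symm, .refl⟩
  | head hs hT ih =>
    subst hX
    cases hs with
    | verifGen => exact .inr ⟨.refl, eq_of_normal star_normal hT⟩
    | verif _ hs =>
      rcases ih rfl with ⟨M', rfl, hM⟩ | ⟨hM, rfl⟩
      · exact .inl ⟨M', rfl, .head hs hM⟩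
      · exact .inr ⟨.head hs hM, rfl⟩

theorem app_inv {M N T : Tm} (h : .app M N ↠ T) :
    (∃ M' N', T = .app M' N' ∧ M ↠ M' ∧ N ↠ N') ∨
      ∃ M₀ N', M ↠ .lam M₀ ∧ N ↠ N' ∧ Tm.subst 0 N' M₀ ↠ T := by
  generalize hX : Tm.app M N = X at h
  induction h using Relation.ReflTransGen.head_induction_on generalizing M N with
  | refl => exact .inl ⟨M, N, hX.symm, .refl, .refl⟩
  | head hs hT ih =>
    subst hX
    cases hs with
    | beta M₀ => exact .inr ⟨M₀, N, .refl, .refl, hT⟩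
    | appL _ hs =>
      rcases ih rfl with ⟨M', N', rfl, hM, hN⟩ | ⟨M₀, N', hM, hN, h₀⟩
      · exact .inl ⟨M', N', rfl, .head hs hM, hN⟩
      · exact .inr ⟨M₀, N', .head hs hM, hN, h₀⟩
    | appR _ hs =>
      rcases ih rfl with ⟨M', N', rfl, hM, hN⟩ | ⟨M₀, N', hM, hN, h₀⟩
      · exact .inl ⟨M', N', rfl, hM, .head hs hN⟩
      · exact .inr ⟨M₀, N', hM, .head hs hN, h₀⟩

end Reduces

def apps (M : Tm) (Qs : List Tm) : Tm := Qs.foldl .app M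

theorem apps_append (M : Tm) (Qs Rs : List Tm) : apps M (Qs ++ Rs) = apps (apps M Qs) Rs :=
  List.foldl_append

theorem Reduces.apps {M M' : Tm} (h : M ↠ M') (Qs : List Tm) : apps M Qs ↠ apps M' Qs := by
  induction Qs generalizing M M' with
  | nil => exact h
  | cons Q Qs ih => exact ih (h.appL Q)

theorem exists_lam_of_apps_cons_reduces_gen {M Q : Tm} {Qs : List Tm} {c : ℕ}
    (h : apps M (Q :: Qs) ↠ .gen c) : ∃ M₀, M ↠ .lam M₀ ∧ apps (.lam M₀) (Q :: Qs) ↠ .gen c := by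
  induction Qs generalizing M Q with
  | nil =>
    rcases h.app_inv with ⟨_, _, ⟨⟩, _⟩ | ⟨M₀, Q', hM, hQ, h₀⟩
    exact ⟨M₀, hM, .beta hQ h₀⟩
  | cons R Rs ih =>
    obtain ⟨Y, hY, hYR⟩ := ih h
    rcases hY.app_inv with ⟨_, _, ⟨⟩, _⟩ | ⟨M₀, Q', hM, hQ, h₀⟩
    exact ⟨M₀, hM, ((Reduces.beta hQ h₀).apps _).trans hYR⟩

theorem apps_var_not_reduces_gen (m : ℕ) (Qs : List Tm) (c : ℕ) : ¬ apps (.var m) Qs ↠ .gen c := by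
  intro h
  cases Qs with
  | nil => nomatch Reduces.eq_of_normal (var_normal m) h
  | cons Q Qs =>
    obtain ⟨M₀, hM, -⟩ := exists_lam_of_apps_cons_reduces_gen h
    nomatch Reduces.eq_of_normal (var_normal m) hM

theorem apps_gen_cons_not_reduces_gen (a : ℕ) (Q : Tm) (Qs : List Tm) (c : ℕ) :
    ¬ apps (.gen a) (Q :: Qs) ↠ .gen c := by
  intro h
  obtain ⟨M₀, hM, -⟩ := exists_lam_of_apps_cons_reduces_gen h
  nomatch Reduces.eq_of_normal (gen_normal a) hM

theorem apps_guard_reduces_gen {G H : Tm} {Qs : List Tm} {c : ℕ}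
    (h : apps (.guard G H) Qs ↠ .gen c) : G ↠ .star ∧ apps H Qs ↠ .gen c := by
  cases Qs with
  | nil => rcases h.guard_inv with ⟨_, _, ⟨⟩, _⟩ | hGH; exact hGH
  | cons Q Qs =>
    obtain ⟨M₀, hM, h₀⟩ := exists_lam_of_apps_cons_reduces_gen h
    rcases hM.guard_inv with ⟨_, _, ⟨⟩, _⟩ | ⟨hG, hH⟩
    exact ⟨hG, (hH.apps _).trans h₀⟩

mutual

theorem subst_genT (k : ℕ) (N : Tm) : ∀ C : Ty, Tm.subst k N (genT C) = genT C
  | .atom _ => rfl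
  | .arrow A B => by simp only [genT, Tm.subst, subst_verifT, subst_genT]; rfl

theorem subst_verifT (k : ℕ) (N : Tm) :
    ∀ (C : Ty) (M : Tm), Tm.subst k N (verifT C M) = verifT C (Tm.subst k N M)
  | .atom _, _ => rfl
  | .arrow A B, M => by simp only [verifT, subst_verifT, Tm.subst, subst_genT]

end

namespace Ty

def target : Ty → ℕ
  | atom a => a
  | arrow _ B => B.target

def argGens : Ty → List Tm
  | atom _ => []
  | arrow A B => genT A :: B.argGens

end Ty

def Realizes (A : Ty) (M : Tm) : Prop := verifT A M ↠ .star

theorem realizes_apps_iff {C : Ty} {M : Tm} {Qs : List Tm} :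
    Realizes C (apps M Qs) ↔ apps M (Qs ++ C.argGens) ↠ .gen C.target := by
  induction C generalizing Qs with
  | atom a =>
    simp only [Ty.argGens, Ty.target, List.append_nil]
    refine ⟨fun h => ?_, fun h => (h.verif a).tail (Step.verifGen a)⟩
    rcases Reduces.verif_inv h with ⟨_, ⟨⟩, _⟩ | ⟨h, -⟩
    exact h
  | arrow A B _ ih =>
    have := ih (Qs := Qs ++ [genT A])
    rwa [apps_append, List.append_assoc] at this

theorem realizes_iff {C : Ty} {M : Tm} : Realizes C M ↔ apps M C.argGens ↠ .gen C.target :=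
  realizes_apps_iff (Qs := [])

namespace Realizes

variable {B₁ B₂ C : Ty} {M M' G H Q : Tm} {Qs : List Tm}

theorem of_reduces (h : Realizes C M) (hM : M ↠ M') : Realizes C M' := by
  rw [realizes_iff] at *
  exact Reduces.to_normal_of_reduces (gen_normal _) h (hM.apps _)

theorem apps_guard (h : Realizes C (apps (.guard G H) Qs)) :
    G ↠ .star ∧ Realizes C (apps H Qs) := by
  rw [realizes_apps_iff] at h
  obtain ⟨hG, hH⟩ := apps_guard_reduces_gen h
  exact ⟨hG, realizes_apps_iff.2 hH⟩

theorem not_apps_var (m : ℕ) : ¬ Realizes C (apps (.var m) Qs) := by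
  rw [realizes_apps_iff]
  exact apps_var_not_reduces_gen m _ _

theorem not_apps_gen_cons (a : ℕ) : ¬ Realizes C (apps (.gen a) (Q :: Qs)) := by
  rw [realizes_apps_iff]
  exact apps_gen_cons_not_reduces_gen a Q _ _

theorem not_atom_lam (a : ℕ) : ¬ Realizes (.atom a) (.lam M) := by
  intro h
  obtain ⟨_, ⟨⟩, -⟩ := (realizes_iff.1 h).lam_inv

theorem apps_genT_arrow (h : Realizes C (apps (genT (.arrow B₁ B₂)) (Q :: Qs))) :
    Realizes B₁ Q ∧ Realizes C (apps (genT B₂) Qs) := by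
  have hβ : Tm.subst 0 Q (.guard (verifT B₁ (.var 0)) (genT B₂)) =
      .guard (verifT B₁ Q) (genT B₂) := by
    simp [Tm.subst, subst_verifT, subst_genT]
  have hstep : Tm.app (genT (.arrow B₁ B₂)) Q ↠ .guard (verifT B₁ Q) (genT B₂) :=
    .single (hβ ▸ Step.beta _ Q)
  exact apps_guard (h.of_reduces (hstep.apps Qs))

theorem eq_of_genT : ∀ {A B : Ty}, Realizes A (genT B) → A = B
  | .atom a, .atom b, h => by
    have := Reduces.eq_of_normal (gen_normal b) (realizes_iff.1 h)
    cases this; rfl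
  | .atom _, .arrow _ _, h => (not_atom_lam _ h).elim
  | .arrow _ _, .atom b, h => (not_apps_gen_cons (Qs := []) b h).elim
  | .arrow _ _, .arrow _ _, h => by
    obtain ⟨h₁, h₂⟩ := apps_genT_arrow (Qs := []) h
    rw [eq_of_genT h₁, eq_of_genT h₂]
-- The call for the argument types swaps `A` and `B`, hence the measure.
termination_by A B => sizeOf A + sizeOf B

end Realizes

inductive SpineRealizes : Ty → List Tm → Ty → Prop
  | nil (C : Ty) : SpineRealizes C [] C
  | cons {A B C : Ty} {Q : Tm} {Qs : List Tm} :
      Realizes A Q → SpineRealizes B Qs C → SpineRealizes (.arrow A B) (Q :: Qs) C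

theorem Realizes.spineRealizes_of_apps_genT {B C : Ty} {Qs : List Tm}
    (h : Realizes C (apps (genT B) Qs)) : SpineRealizes B Qs C := by
  induction Qs generalizing B with
  | nil => rw [Realizes.eq_of_genT h]; exact .nil B
  | cons Q Qs ih =>
    cases B with
    | atom b => exact (Realizes.not_apps_gen_cons b h).elim
    | arrow B₁ B₂ =>
      obtain ⟨hQ, hQs⟩ := Realizes.apps_genT_arrow h
      exact .cons hQ (ih hQs)

/-- Weaker than `σ = genSub Γ`, but unlike that equation it survives going under a binder
(`Generative.cons`). -/
def Generative (Γ : List Ty) (σ : ℕ → Tm) : Prop :=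
  ∀ n, (∃ m, σ n = .var m) ∨ ∃ B, Γ[n]? = some B ∧ σ n = genT B

theorem generative_genSub (Γ : List Ty) : Generative Γ (genSub Γ) := by
  intro n
  cases hn : Γ[n]? with
  | none => exact .inl ⟨n, by simp [genSub, hn]⟩
  | some B => exact .inr ⟨B, rfl, by simp [genSub, hn]⟩

theorem Generative.cons {Γ : List Ty} {σ : ℕ → Tm} (h : Generative Γ σ) (A : Ty) :
    Generative (A :: Γ) (consSub (genT A) σ)
  | 0 => .inr ⟨A, rfl, rfl⟩
  | n + 1 => h n

mutual

theorem typing_of_realizes_apps {Γ : List Ty} {σ : ℕ → Tm} (hσ : Generative Γ σ) :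
    ∀ {M : Tm}, M.Pure → (∀ N, ¬ BStep M N) → (∀ M₀, M ≠ .lam M₀) →
      ∀ {C : Ty} {Qs : List Tm}, Realizes C (apps (substPar σ M) Qs) →
        ∃ B, Typing Γ M B ∧ SpineRealizes B Qs C
  | .var n, _, _, _, C, Qs, h => by
    change Realizes C (apps (σ n) Qs) at h
    rcases hσ n with ⟨m, hm⟩ | ⟨B, hB, hm⟩
    · exact (Realizes.not_apps_var m (hm ▸ h)).elim
    · exact ⟨B, .var hB, Realizes.spineRealizes_of_apps_genT (hm ▸ h)⟩
  | .app P Q, hpure, hnf, _, _, _, h => by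
    have hP : ∀ M₀, P ≠ .lam M₀ := by rintro M₀ rfl; exact hnf _ (.beta M₀ Q)
    obtain ⟨_, hPty, hPspine⟩ :=
      typing_of_realizes_apps hσ hpure.1 (fun _ h => hnf _ (.appL Q h)) hP
        (Qs := substPar σ Q :: _) h
    cases hPspine with
    | cons hQ hspine =>
      exact ⟨_, .app hPty (typing_of_realizes hσ hpure.2 (fun _ h => hnf _ (.appR P h)) hQ),
        hspine⟩
  | .lam M₀, _, _, hM, _, _, _ => (hM M₀ rfl).elim
  | .star, hpure, _, _, _, _, _ | .guard _ _, hpure, _, _, _, _, _ | .gen _, hpure, _, _, _, _, _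
  | .verif _ _, hpure, _, _, _, _, _ => nomatch hpure

theorem typing_of_realizes {Γ : List Ty} {σ : ℕ → Tm} (hσ : Generative Γ σ) :
    ∀ {M : Tm}, M.Pure → (∀ N, ¬ BStep M N) →
      ∀ {A : Ty}, Realizes A (substPar σ M) → Typing Γ M A
  | .var _, hpure, hnf, _, h | .app _ _, hpure, hnf, _, h => by
    obtain ⟨_, hty, ⟨⟩⟩ :=
      typing_of_realizes_apps hσ hpure hnf (fun _ h => nomatch h) (Qs := []) h
    exact hty
  | .lam M₀, _, _, .atom a, h => (Realizes.not_atom_lam a h).elim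
  | .lam M₀, hpure, hnf, .arrow A B, h => by
    have hbody : Realizes B (substPar (consSub (genT A) σ) M₀) := by
      rw [← subst_substPar_liftSub]
      exact Realizes.of_reduces (M := .app (.lam _) (genT A)) h (.single (Step.beta _ _))
    exact .lam (typing_of_realizes (hσ.cons A) (M := M₀) hpure (fun _ h => hnf _ (.lam h)) hbody)
  | .star, hpure, _, _, _ | .guard _ _, hpure, _, _, _ | .gen _, hpure, _, _, _
  | .verif _ _, hpure, _, _, _ => nomatch hpure

end

namespace Tm

theorem Pure.shift {M : Tm} (h : M.Pure) (d c : ℕ) : (M.shift d c).Pure := by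
  induction M generalizing c with
  | var n => by_cases n < c <;> simp [Tm.shift, Tm.Pure, *]
  | lam M ih => exact ih h _
  | app M N ihM ihN => exact ⟨ihM h.1 _, ihN h.2 _⟩
  | _ => exact h.elim

theorem Pure.subst {M N : Tm} (hM : M.Pure) (hN : N.Pure) (k : ℕ) : (Tm.subst k N M).Pure := by
  induction M generalizing N k with
  | var n => by_cases n = k <;> by_cases k < n <;> simp [Tm.subst, Tm.Pure, *]
  | lam M ih => exact ih hM (hN.shift 1 0) _
  | app M N ihM ihN => exact ⟨ihM hM.1 hN _, ihN hM.2 hN _⟩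
  | _ => exact hM.elim

theorem Pure.of_bstep {M N : Tm} (h : BStep M N) (hM : M.Pure) : N.Pure := by
  induction h with
  | beta M => exact Pure.subst (M := M) hM.1 hM.2 0
  | lam _ ih => exact ih hM
  | appL _ _ ih => exact ⟨ih hM.1, hM.2⟩
  | appR _ _ ih => exact ⟨hM.1, ih hM.2⟩
  | _ => exact hM.elim

theorem Pure.of_bsteps {M N : Tm} (h : Relation.ReflTransGen BStep M N) (hM : M.Pure) :
    N.Pure := by
  induction h with
  | refl => exact hM
  | tail _ hs ih => exact ih.of_bstep hs

end Tm

theorem BStep.substPar {M N : Tm} (h : BStep M N) (σ : ℕ → Tm) :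
    Step (substPar σ M) (substPar σ N) := by
  induction h generalizing σ with
  | beta M N => rw [substPar_subst]; exact Step.beta _ _
  | lam _ ih => exact Step.lam (ih _)
  | appL _ _ ih => exact Step.appL _ (ih _)
  | appR _ _ ih => exact Step.appR _ (ih _)
  | guardL _ _ ih => exact Step.guardL _ (ih _)
  | guardR _ _ ih => exact Step.guardR _ (ih _)
  | verif a _ ih => exact Step.verif a (ih _)

/-- Completeness: if M is a pure β-normalizing metaterm whose
β-normal form is M↓, and ⟨A⟩(M^Γ) ↠ ⋆, then Γ ⊢ M↓ : A. -/
theorem completeness {Γ : List Ty} {M Mnf : Tm} {A : Ty}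
    (hpure : Tm.Pure M)
    (hred : Relation.ReflTransGen BStep M Mnf)
    (hnf : ∀ N, ¬ BStep Mnf N)
    (h : Relation.ReflTransGen Step (verifT A (substPar (genSub Γ) M)) Tm.star) :
    Typing Γ Mnf A := by
  have hsub : substPar (genSub Γ) M ↠ substPar (genSub Γ) Mnf :=
    Relation.ReflTransGen.lift _ (fun _ _ hs => hs.substPar _) _ _ hred
  exact typing_of_realizes (generative_genSub Γ) (hpure.of_bsteps hred) hnf
    (Realizes.of_reduces h hsub)
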